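/- Let F be a field and C the split Cayley algebra over F, with the maps u_α(t), u_β(t), u_{α+β}(t), u_{2α+β}(t), u_{3α+β}(t), u_{3α+2β}(t), n_α, n_β defined below. Then for every t ∈ F the following identities of maps C → C hold: (i) n_α ∘ u_{3α+β}(t) = u_β(t) ∘ n_α; (ii) n_β ∘ u_{α+β}(t) = u_α(−t) ∘ n_β; (iii) n_α ∘ u_{2α+β}(t) = u_{α+β}(−t) ∘ n_α; and (iv) n_β ∘ u_{3α+2β}(t) = u_{3α+β}(−t) ∘ n_β. -/
import Mathlib


open Matrix

/-- The underlying space of the split Cayley algebra over `F`: pairs `(x | y)` of 2×2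
matrices. -/
abbrev Cayley (F : Type*) [Field F] := Matrix (Fin 2) (Fin 2) F × Matrix (Fin 2) (Fin 2) F

variable {F : Type*} [Field F]

/-- The root map `u_α(t) (x | y) = (V(t)·x·V(t)⁻¹ | y·V(−t))` with `V(t) = [[1,t],[0,1]]`. -/
def uA (t : F) (z : Cayley F) : Cayley F :=
  (!![1, t; 0, 1] * z.1 * !![1, -t; 0, 1], z.2 * !![1, -t; 0, 1])

/-- The root map `u_{−α}(t) (x | y) = (W(t)·x·W(t)⁻¹ | y·W(−t))` with `W(t) = [[1,0],[t,1]]`. -/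
def uMA (t : F) (z : Cayley F) : Cayley F :=
  (!![1, 0; t, 1] * z.1 * !![1, 0; -t, 1], z.2 * !![1, 0; -t, 1])

/-- The root map `u_β(t)`: it sends `(x | y)` to the pair with `x₃ ↦ x₃ − t·y₄` and
`y₁ ↦ y₁ + t·x₂`, all other entries unchanged. -/
def uB (t : F) (z : Cayley F) : Cayley F :=
  (!![z.1 0 0, z.1 0 1; z.1 1 0 - t * z.2 1 1, z.1 1 1],
   !![z.2 0 0 + t * z.1 0 1, z.2 0 1; z.2 1 0, z.2 1 1])

/-- The root map `u_{−β}(t)`: it sends `(x | y)` to the pair with `x₂ ↦ x₂ + t·y₁` and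
`y₄ ↦ y₄ − t·x₃`, all other entries unchanged. -/
def uMB (t : F) (z : Cayley F) : Cayley F :=
  (!![z.1 0 0, z.1 0 1 + t * z.2 0 0; z.1 1 0, z.1 1 1],
   !![z.2 0 0, z.2 0 1; z.2 1 0, z.2 1 1 - t * z.1 1 0])

/-- The root map `u_{α+β}(t)`. -/
def uAB (t : F) (z : Cayley F) : Cayley F :=
  (!![z.1 0 0 + t * z.2 1 1, z.1 0 1;
      z.1 1 0 + t * z.2 1 0, z.1 1 1 - t * z.2 1 1],
   !![z.2 0 0 + t * (z.1 1 1 - z.1 0 0) - t ^ 2 * z.2 1 1, z.2 0 1 + t * z.1 0 1;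
      z.2 1 0, z.2 1 1])

/-- The root map `u_{2α+β}(t)`. -/
def u2AB (t : F) (z : Cayley F) : Cayley F :=
  (!![z.1 0 0 - t * z.2 1 0, z.1 0 1 + t * z.2 1 1;
      z.1 1 0, z.1 1 1 + t * z.2 1 0],
   !![z.2 0 0 - t * z.1 1 0, z.2 0 1 + t * (z.1 1 1 - z.1 0 0) + t ^ 2 * z.2 1 0;
      z.2 1 0, z.2 1 1])

/-- The root map `u_{3α+β}(t)`. -/
def u3AB (t : F) (z : Cayley F) : Cayley F :=
  (!![z.1 0 0, z.1 0 1 - t * z.2 1 0; z.1 1 0, z.1 1 1],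
   !![z.2 0 0, z.2 0 1 - t * z.1 1 0; z.2 1 0, z.2 1 1])

/-- The root map `u_{3α+2β}(t)`. -/
def u3A2B (t : F) (z : Cayley F) : Cayley F :=
  (z.1,
   !![z.2 0 0 - t * z.2 1 0, z.2 0 1 - t * z.2 1 1; z.2 1 0, z.2 1 1])

/-- The Weyl representative `n_α (x | y) = (s·x·s⁻¹ | y·s)`, `s = [[0,−1],[1,0]]`. -/
def nA (z : Cayley F) : Cayley F :=
  (!![0, -1; 1, 0] * z.1 * !![0, 1; -1, 0], z.2 * !![0, -1; 1, 0])

/-- The Weyl representative `n_β (x | y) = ([[x₁,−y₁],[−y₄,x₄]] | [[x₂,y₂],[y₃,x₃]])`. -/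
def nB (z : Cayley F) : Cayley F :=
  (!![z.1 0 0, -(z.2 0 0); -(z.2 1 1), z.1 1 1],
   !![z.1 0 1, z.2 0 1; z.2 1 0, z.1 1 0])

/-- Conjugation relations between Weyl representatives and root maps in `G₂ = Aut(C)`:
`Int(n_α) u_{3α+β}(t) = u_β(t)`, `Int(n_β) u_{α+β}(t) = u_α(−t)`,
`Int(n_α) u_{2α+β}(t) = u_{α+β}(−t)`, `Int(n_β) u_{3α+2β}(t) = u_{3α+β}(−t)`. -/
theorem weyl_conjugation_of_root_maps (t : F) :
    (nA (F := F) ∘ u3AB t = uB t ∘ nA) ∧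
    (nB (F := F) ∘ uAB t = uA (-t) ∘ nB) ∧
    (nA (F := F) ∘ u2AB t = uAB (-t) ∘ nA) ∧
    (nB (F := F) ∘ u3A2B t = u3AB (-t) ∘ nB) := by
  refine ⟨?_, ?_, ?_, ?_⟩ <;> funext z <;>
    · simp only [Function.comp, nA, nB, uA, uB, uAB, u2AB, u3AB, u3A2B]
      refine Prod.ext ?_ ?_ <;>
      · ext i j
        fin_cases i <;> fin_cases j <;>
          simp [Matrix.mul_apply, Matrix.vecMul, dotProduct, Fin.sum_univ_succ] <;> ring
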